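/- arXiv:quant-ph/9910033 — 4 statements merged into one kernel-verified Lean document; each statement's English description precedes it below -/
import Mathlib

section
/- Let n be a natural number and let s be a nonzero vector in Fin (n+1) → ZMod 2. Then the number of functions f : (Fin (n+1) → ZMod 2) → (Fin n → ZMod 2) that are 2-to-1 and satisfy f(x + s) = f(x) for all x is exactly (2^n)!, i.e., Nat.card {f // f is 2-to-1 ∧ ∀ x, f (x + s) = f x} = (2^n)! . -/
/-!
A function `f` with `f (x + s) = f x` is constant on the cosets `{x, x + s}` of `⟨s⟩`, so it is
`g ∘ π` for the projection `π : V_{n+1} → V_{n+1} ⧸ ⟨s⟩` and a unique `g`; since every coset has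
exactly two elements, `f` is 2-to-1 precisely when `g` is injective. Both `V_{n+1} ⧸ ⟨s⟩` and `V_n`
have `2 ^ n` elements, so the admissible `g` are the bijections between them.
-/

open Function

theorem Nat.card_embedding_eq_factorial {α β : Type*} [Finite α] [Finite β]
    (h : Nat.card α = Nat.card β) : Nat.card (α ↪ β) = (Nat.card β).factorial := by
  have := Fintype.ofFinite α
  have := Fintype.ofFinite β
  rw [Nat.card_eq_fintype_card, Fintype.card_embedding_eq, Fintype.card_eq_nat_card,
    Fintype.card_eq_nat_card, h, Nat.descFactorial_self]

section FiberCount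

variable {α Q β : Type*} {π : α → Q} {k : ℕ}

theorem Function.Surjective.injective_iff_card_fiber_comp [Finite α] (hπ : Surjective π)
    (hk : ∀ q, Nat.card (π ⁻¹' {q}) = k) (g : Q → β) :
    Injective g ↔ ∀ y ∈ Set.range (g ∘ π), Nat.card ((g ∘ π) ⁻¹' {y}) = k := by
  constructor
  · rintro hg _ ⟨x, rfl⟩
    rw [Set.preimage_comp, comp_apply, ← Set.image_singleton, hg.preimage_image, hk]
  · intro h q₁ q₂ hq
    obtain ⟨x₁, rfl⟩ := hπ q₁
    obtain ⟨x₂, rfl⟩ := hπ q₂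
    -- the fibre of `g ∘ π` through `x₁` contains the `π`-fibre of `x₁` and has the same size
    have hfiber : π ⁻¹' {π x₁} = (g ∘ π) ⁻¹' {g (π x₁)} := by
      refine Set.eq_of_subset_of_ncard_le (fun x hx => by simp_all) ?_ (Set.toFinite _)
      rw [← Nat.card_coe_set_eq, ← Nat.card_coe_set_eq, hk]
      exact (h _ ⟨x₁, rfl⟩).le
    have hx₂ : x₂ ∈ π ⁻¹' {π x₁} := hfiber ▸ hq.symm
    exact hx₂.symm

theorem Function.Surjective.card_factorsThrough_eq_card_embedding [Finite α] (hπ : Surjective π)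
    (hk : ∀ q, Nat.card (π ⁻¹' {q}) = k) :
    Nat.card {f : α → β // (∀ y ∈ Set.range f, Nat.card (f ⁻¹' {y}) = k) ∧ f.FactorsThrough π}
      = Nat.card (Q ↪ β) := by
  refine (Nat.card_eq_of_bijective
    (fun e : Q ↪ β => ⟨e ∘ π, (hπ.injective_iff_card_fiber_comp hk e).1 e.injective,
      fun _ _ h => congrArg e h⟩) ⟨fun e e' h => ?_, ?_⟩).symm
  · exact DFunLike.coe_injective (hπ.injective_comp_right (congrArg Subtype.val h))
  · rintro ⟨f, hfiber, hf⟩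
    have hcomp : (f ∘ surjInv hπ) ∘ π = f := funext fun x => hf (surjInv_eq hπ (π x))
    refine ⟨⟨f ∘ surjInv hπ, (hπ.injective_iff_card_fiber_comp hk _).2 ?_⟩, Subtype.ext hcomp⟩
    rwa [hcomp]

end FiberCount

namespace QuotientAddGroup

variable {G β : Type*} [AddGroup G]

theorem card_preimage_mk_singleton (H : AddSubgroup G) (q : G ⧸ H) :
    Nat.card ((mk : G → G ⧸ H) ⁻¹' {q}) = Nat.card H := by
  simp [Nat.card_congr (preimageMkEquivAddSubgroupProdSet H {q})]

theorem factorsThrough_mk_zmultiples_iff (s : G) (f : G → β) :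
    f.FactorsThrough (mk : G → G ⧸ AddSubgroup.zmultiples s) ↔ ∀ x, f (x + s) = f x := by
  constructor
  · intro hf x
    exact hf (QuotientAddGroup.eq.2 (by simp))
  · intro hf a b hab
    have hinv : ∀ h ∈ AddSubgroup.zmultiples s, ∀ x, f (x + h) = f x := by
      intro h hh
      rw [AddSubgroup.zmultiples_eq_closure] at hh
      induction hh using AddSubgroup.closure_induction with
      | mem h hh => rw [Set.mem_singleton_iff.1 hh]; exact hf
      | zero => simp
      | add h₁ h₂ _ _ ih₁ ih₂ => intro x; rw [← add_assoc, ih₂, ih₁]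
      | neg h _ ih => intro x; rw [← ih (x + -h), neg_add_cancel_right]
    simpa using (hinv _ (QuotientAddGroup.eq.1 hab) a).symm

end QuotientAddGroup

/-- For a fixed nonzero mask `s`, there are exactly `(2^n)!` 2-to-1 Simon
functions with mask `s`. -/
theorem card_simon_functions_fixed_mask (n : ℕ)
    (s : Fin (n + 1) → ZMod 2) (hs : s ≠ 0) :
    Nat.card {f : (Fin (n + 1) → ZMod 2) → (Fin n → ZMod 2) //
        (∀ y ∈ Set.range f, Nat.card (f ⁻¹' {y}) = 2) ∧ ∀ x, f (x + s) = f x}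
      = Nat.factorial (2 ^ n) := by
  set H := AddSubgroup.zmultiples s
  have hH : Nat.card H = 2 := by
    rw [Nat.card_zmultiples]
    exact addOrderOf_eq_prime (CharTwo.two_nsmul s) hs
  have hQ : Nat.card ((Fin (n + 1) → ZMod 2) ⧸ H) = 2 ^ n := by
    have := H.card_eq_card_quotient_mul_card_addSubgroup
    rw [hH, Nat.card_fun, Nat.card_zmod, Nat.card_fin, pow_succ] at this
    exact (Nat.eq_of_mul_eq_mul_right two_pos this).symm
  simp_rw [← QuotientAddGroup.factorsThrough_mk_zmultiples_iff]
  rw [(QuotientAddGroup.mk_surjective (s := H)).card_factorsThrough_eq_card_embedding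
      fun q => (QuotientAddGroup.card_preimage_mk_singleton H q).trans hH,
    Nat.card_embedding_eq_factorial (hQ.trans (by simp)), Nat.card_fun, Nat.card_zmod, Nat.card_fin]
end

section
/- Let n be a natural number. Then the number of functions f : (Fin (n+1) → ZMod 2) → (Fin n → ZMod 2) for which there exists a nonzero s with f 2-to-1 and f(x + s) = f(x) for all x equals (2^{n+1} − 1) · (2^n)!, i.e., Nat.card {f // ∃ s ≠ 0, f is 2-to-1 ∧ ∀ x, f (x + s) = f x} = (2^{n+1} − 1) * (2^n)! . -/
/-!
A 2-to-1 function `f` with period `s ≠ 0` has the pairs `{x, x + s}` as fibres, so its kernel is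
the coset relation of `⟨s⟩`; in particular the mask `s` is determined by `f`. Functions with a
prescribed kernel `r` correspond to injections out of the quotient by `r`, and here
`|V_{n+1} ⧸ ⟨s⟩| = |V_n| = 2^n`, so each of the `2^{n+1} - 1` masks contributes `(2^n)!` functions.
-/

open Function QuotientAddGroup AddSubgroup

def IsTwoToOne {α β : Type*} (f : α → β) : Prop :=
  ∀ y ∈ Set.range f, Nat.card (f ⁻¹' {y}) = 2

theorem Nat.card_subtype_exists_eq_sum {ι α : Type*} [Fintype ι] [Finite α] {P : ι → α → Prop}
    (huniq : ∀ a i j, P i a → P j a → i = j) :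
    Nat.card {a // ∃ i, P i a} = ∑ i, Nat.card {a // P i a} := by
  rw [← Nat.card_sigma]
  refine (Nat.card_eq_of_bijective (fun p => ⟨p.2.1, p.1, p.2.2⟩) ⟨?_, ?_⟩).symm
  · rintro ⟨i, a, ha⟩ ⟨j, b, hb⟩ hab
    obtain rfl : a = b := congrArg Subtype.val hab
    obtain rfl := huniq a i j ha hb
    rfl
  · rintro ⟨a, i, ha⟩
    exact ⟨⟨i, a, ha⟩, rfl⟩

namespace Setoid

variable {α β : Type*}

theorem ker_comp_mk_eq_iff {r : Setoid α} {g : Quotient r → β} :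
    ker (g ∘ Quotient.mk r) = r ↔ Injective g := by
  constructor
  · intro h a b
    induction a, b using Quotient.inductionOn₂ with
    | h x y =>
      intro hxy
      exact Quotient.sound (h ▸ ker_def.2 hxy)
  · intro hg
    ext x y
    simp [ker_def, hg.eq_iff, Quotient.eq]

theorem range_comp_mk_eq_setOf_ker_eq (r : Setoid α) :
    Set.range (fun g : Quotient r ↪ β => g ∘ Quotient.mk r) = {f | ker f = r} := by
  ext f
  constructor
  · rintro ⟨g, rfl⟩
    exact ker_comp_mk_eq_iff.2 g.injective
  · rintro (rfl : ker f = r)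
    exact ⟨⟨kerLift f, kerLift_injective f⟩, rfl⟩

theorem card_ker_eq [Finite α] [Finite β] (r : Setoid α) :
    Nat.card {f : α → β // ker f = r} = (Nat.card β).descFactorial (Nat.card (Quotient r)) := by
  have : Fintype (Quotient r) := Fintype.ofFinite _
  have : Fintype β := Fintype.ofFinite _
  have hinj : Injective (fun g : Quotient r ↪ β => g ∘ Quotient.mk r) :=
    Quotient.mk_surjective.injective_comp_right.comp DFunLike.coe_injective
  rw [← Set.coe_ofPred, ← range_comp_mk_eq_setOf_ker_eq, Nat.card_range_of_injective hinj,
    Nat.card_eq_fintype_card, Fintype.card_embedding_eq, Nat.card_eq_fintype_card,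
    Nat.card_eq_fintype_card]

end Setoid

section AddGroup

variable {G β : Type*} [AddGroup G] {s t : G} {f : G → β}

theorem IsTwoToOne.preimage_apply_eq_pair (h2 : IsTwoToOne f) (hp : Periodic f s) (hs : s ≠ 0)
    (x : G) : f ⁻¹' {f x} = {x, x + s} := by
  have hcard : (f ⁻¹' {f x}).ncard = 2 := by
    rw [← Nat.card_coe_set_eq, h2 _ ⟨x, rfl⟩]
  have hsub : {x, x + s} ⊆ f ⁻¹' {f x} := by
    rintro _ (rfl | rfl)
    exacts [rfl, hp x]
  refine (Set.eq_of_subset_of_ncard_le hsub ?_ (Set.finite_of_ncard_ne_zero (by omega))).symm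
  rw [hcard, Set.ncard_pair (by simpa using hs)]

theorem IsTwoToOne.periodic_unique (h2 : IsTwoToOne f) (hps : Periodic f s) (hpt : Periodic f t)
    (hs : s ≠ 0) (ht : t ≠ 0) : s = t := by
  have h := (h2.preimage_apply_eq_pair hps hs 0).symm.trans (h2.preimage_apply_eq_pair hpt ht 0)
  rw [Set.pair_eq_pair_iff] at h
  rcases h with ⟨-, h⟩ | ⟨h, -⟩
  · simpa using h
  · exact absurd (by simpa using h.symm) ht

theorem isTwoToOne_and_periodic_iff_preimage_eq_pair (hs : s ≠ 0) :
    IsTwoToOne f ∧ Periodic f s ↔ ∀ x, f ⁻¹' {f x} = {x, x + s} := by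
  refine ⟨fun ⟨h2, hp⟩ => h2.preimage_apply_eq_pair hp hs, fun h => ⟨?_, fun x => ?_⟩⟩
  · rintro _ ⟨x, rfl⟩
    rw [h x, Nat.card_coe_set_eq, Set.ncard_pair (by simpa using hs)]
  · exact (show x + s ∈ f ⁻¹' {f x} by simp [h x])

theorem mem_zmultiples_iff_eq_zero_or_eq (hs : addOrderOf s = 2) {a : G} :
    a ∈ zmultiples s ↔ a = 0 ∨ a = s := by
  classical
  rw [(addOrderOf_pos_iff.1 (by omega)).mem_zmultiples_iff_mem_range_addOrderOf, hs]
  simp [Finset.range_add_one, eq_comm, or_comm]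

theorem leftRel_zmultiples_iff (hs : addOrderOf s = 2) {x y : G} :
    leftRel (zmultiples s) x y ↔ y = x ∨ y = x + s := by
  rw [leftRel_apply, mem_zmultiples_iff_eq_zero_or_eq hs, neg_add_eq_zero, neg_add_eq_iff_eq_add,
    eq_comm (a := x)]

theorem isTwoToOne_and_periodic_iff_ker_eq (hs : addOrderOf s = 2) :
    IsTwoToOne f ∧ Periodic f s ↔ Setoid.ker f = leftRel (zmultiples s) := by
  have hs0 : s ≠ 0 := by rintro rfl; simp at hs
  rw [isTwoToOne_and_periodic_iff_preimage_eq_pair hs0, Setoid.ext_iff]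
  refine forall_congr' fun x => ?_
  simp only [Set.ext_iff, Set.mem_preimage, Set.mem_singleton_iff, Set.mem_insert_iff,
    Setoid.ker_def, leftRel_zmultiples_iff hs, eq_comm (a := f x)]

theorem card_isTwoToOne_periodic [Finite G] [Finite β] (hs : addOrderOf s = 2)
    (hcard : Nat.card G = Nat.card β * 2) :
    Nat.card {f : G → β // IsTwoToOne f ∧ Periodic f s} = (Nat.card β).factorial := by
  have hquot : Nat.card (G ⧸ zmultiples s) = Nat.card β := by
    have := card_eq_card_quotient_mul_card_addSubgroup (zmultiples s)
    rw [Nat.card_zmultiples, hs, hcard] at this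
    omega
  rw [Nat.card_congr (Equiv.subtypeEquivRight fun f => isTwoToOne_and_periodic_iff_ker_eq hs),
    Setoid.card_ker_eq, ← hquot]
  exact Nat.descFactorial_self _

end AddGroup

/-- The number of 2-to-1 Simon functions (over all nonzero masks) is
`(2^{n+1} - 1) * (2^n)!`. -/
theorem card_simon_functions (n : ℕ) :
    Nat.card {f : (Fin (n + 1) → ZMod 2) → (Fin n → ZMod 2) //
        ∃ s : Fin (n + 1) → ZMod 2, s ≠ 0 ∧
          (∀ y ∈ Set.range f, Nat.card (f ⁻¹' {y}) = 2) ∧ ∀ x, f (x + s) = f x}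
      = (2 ^ (n + 1) - 1) * Nat.factorial (2 ^ n) := by
  have horder (s : {s : Fin (n + 1) → ZMod 2 // s ≠ 0}) : addOrderOf s.1 = 2 :=
    addOrderOf_eq_prime (ZModModule.char_nsmul_eq_zero 2 s.1) s.2
  calc _ = Nat.card {f : (Fin (n + 1) → ZMod 2) → (Fin n → ZMod 2) //
        ∃ s : {s : Fin (n + 1) → ZMod 2 // s ≠ 0}, IsTwoToOne f ∧ Periodic f s} :=
        Nat.card_congr <| Equiv.subtypeEquivRight fun f =>
          ⟨fun ⟨s, hs, h⟩ => ⟨⟨s, hs⟩, h⟩, fun ⟨s, h⟩ => ⟨s, s.2, h⟩⟩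
    _ = ∑ s : {s : Fin (n + 1) → ZMod 2 // s ≠ 0}, Nat.factorial (2 ^ n) := by
        rw [Nat.card_subtype_exists_eq_sum fun f s t hfs hft =>
          Subtype.ext (hfs.1.periodic_unique hfs.2 hft.2 s.2 t.2)]
        refine Finset.sum_congr rfl fun s _ => ?_
        rw [card_isTwoToOne_periodic (horder s)] <;> simp [pow_succ]
    _ = (2 ^ (n + 1) - 1) * Nat.factorial (2 ^ n) := by
        rw [Finset.sum_const, Finset.card_univ, Fintype.card_subtype_compl, Fintype.card_subtype_eq,
          smul_eq_mul]
        simp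
end

section
/- Let n ≥ 1 be a natural number, let V = Fin (2n) → ZMod 2, and let Q be a Finset of V with (Q.card : ℝ) ≤ 2^{n/4} (real exponent n/4). Then, as real numbers, (card of {s ∈ V | s ≠ 0 ∧ ∃ u ∈ Q, ∃ v ∈ Q, u ≠ v ∧ u + v = s}) / (2^{2n} − 1) ≤ 2^{−1.4·n} (real power). In other words, a uniformly random nonzero s of length 2n causes a collision among any fixed set of at most 2^{n/4} queries with probability at most 2^{−1.4 n}. -/
lemma two_rpow_fifth : (8/7 : ℝ) ≤ (2 : ℝ) ^ (0.2 : ℝ) := by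
  have hx : (0:ℝ) ≤ (2:ℝ) ^ (0.2:ℝ) := Real.rpow_nonneg (by norm_num) _
  have h5 : ((2:ℝ) ^ (0.2:ℝ)) ^ (5:ℕ) = 2 := by
    rw [← Real.rpow_natCast ((2:ℝ) ^ (0.2:ℝ)) 5, ← Real.rpow_mul (by norm_num)]
    norm_num
  refine le_of_pow_le_pow_left₀ (n := 5) (by norm_num) hx ?_
  rw [h5]; norm_num

/-- A uniformly random nonzero `s` of length `2n` causes a collision among any
fixed set of at most `2^{n/4}` queries with probability at most `2^{-1.4 n}`. -/
theorem random_mask_collision_probability (n : ℕ) (hn : 1 ≤ n)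
    (Q : Finset (Fin (2 * n) → ZMod 2))
    (hQ : (Q.card : ℝ) ≤ (2 : ℝ) ^ ((n : ℝ) / 4)) :
    ((Nat.card {s : Fin (2 * n) → ZMod 2 |
          s ≠ 0 ∧ ∃ u ∈ Q, ∃ v ∈ Q, u ≠ v ∧ u + v = s} : ℝ)
        / ((2 : ℝ) ^ (2 * n) - 1))
      ≤ (2 : ℝ) ^ (-(1.4) * (n : ℝ)) := by
  classical
  set S : Set (Fin (2 * n) → ZMod 2) :=
    {s | s ≠ 0 ∧ ∃ u ∈ Q, ∃ v ∈ Q, u ≠ v ∧ u + v = s} with hS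
  set T : Finset (Fin (2 * n) → ZMod 2) := Q.offDiag.image (fun p => p.1 + p.2) with hT
  have hST : S ⊆ ↑T := by
    rintro s ⟨-, u, hu, v, hv, huv, rfl⟩
    exact Finset.mem_image.mpr ⟨(u, v), Finset.mem_offDiag.mpr ⟨hu, hv, huv⟩, rfl⟩
  have hNT : Nat.card S ≤ Q.card * Q.card - Q.card := by
    calc Nat.card S ≤ Nat.card (↑T : Set (Fin (2 * n) → ZMod 2)) :=
          Nat.card_mono T.finite_toSet hST
      _ = T.card := Nat.card_eq_finsetCard T
      _ ≤ Q.offDiag.card := Finset.card_image_le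
      _ = Q.card * Q.card - Q.card := Finset.offDiag_card Q
  have hden : (0:ℝ) < (2:ℝ) ^ (2 * n) - 1 := by
    have h1 : (1:ℝ) < 2 ^ (2 * n) := one_lt_pow₀ (by norm_num) (by omega)
    linarith
  rw [div_le_iff₀ hden]
  by_cases hn2 : 2 ≤ n
  · -- main case
    have hnR : (2:ℝ) ≤ (n:ℝ) := by exact_mod_cast hn2
    have hNm : (Nat.card S : ℝ) ≤ (Q.card : ℝ) * (Q.card : ℝ) := by
      have : Nat.card S ≤ Q.card * Q.card := hNT.trans (Nat.sub_le _ _)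
      exact_mod_cast this
    have hm2 : (Q.card : ℝ) * (Q.card : ℝ) ≤ (2:ℝ) ^ ((n:ℝ)/2) := by
      have := mul_le_mul hQ hQ (Nat.cast_nonneg _) (Real.rpow_nonneg (by norm_num) _)
      calc (Q.card : ℝ) * (Q.card : ℝ) ≤ (2:ℝ) ^ ((n:ℝ)/4) * (2:ℝ) ^ ((n:ℝ)/4) := this
        _ = (2:ℝ) ^ ((n:ℝ)/4 + (n:ℝ)/4) := (Real.rpow_add (by norm_num) _ _).symm
        _ = (2:ℝ) ^ ((n:ℝ)/2) := by ring_nf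
    have hrw : (2:ℝ) ^ (-(1.4) * (n:ℝ)) * ((2:ℝ) ^ (2 * n) - 1)
        = (2:ℝ) ^ (0.6 * (n:ℝ)) - (2:ℝ) ^ (-(1.4) * (n:ℝ)) := by
      have hpow : ((2:ℝ) ^ (2 * n) : ℝ) = (2:ℝ) ^ ((2 * n : ℕ) : ℝ) := by
        rw [Real.rpow_natCast]
      rw [mul_sub, mul_one, hpow, ← Real.rpow_add (by norm_num)]
      push_cast
      ring_nf
    rw [hrw]
    have e1 : (2:ℝ) ^ ((n:ℝ)/2) ≤ (2:ℝ) ^ (0.6 * (n:ℝ)) * (7/8) := by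
      have h1 : (2:ℝ) ^ ((n:ℝ)/2) ≤ (2:ℝ) ^ (0.6 * (n:ℝ) + (-0.2)) := by
        apply Real.rpow_le_rpow_of_exponent_le (by norm_num)
        nlinarith
      have h2 : (2:ℝ) ^ (0.6 * (n:ℝ) + (-0.2)) = (2:ℝ) ^ (0.6 * (n:ℝ)) * (2:ℝ) ^ (-0.2:ℝ) :=
        Real.rpow_add (by norm_num) _ _
      have h3 : (2:ℝ) ^ (-0.2:ℝ) ≤ 7/8 := by
        rw [show (-0.2:ℝ) = -(0.2) by norm_num, Real.rpow_neg (by norm_num)]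
        have hpos : (0:ℝ) < (2:ℝ) ^ (0.2:ℝ) := Real.rpow_pos_of_pos (by norm_num) _
        rw [inv_le_comm₀ hpos (by norm_num)]
        linarith [two_rpow_fifth]
      calc (2:ℝ) ^ ((n:ℝ)/2) ≤ (2:ℝ) ^ (0.6 * (n:ℝ)) * (2:ℝ) ^ (-0.2:ℝ) := by
            rw [← h2]; exact h1
        _ ≤ (2:ℝ) ^ (0.6 * (n:ℝ)) * (7/8) :=
            mul_le_mul_of_nonneg_left h3 (Real.rpow_nonneg (by norm_num) _)
    have h2big : (2:ℝ) ≤ (2:ℝ) ^ (0.6 * (n:ℝ)) := by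
      have : (2:ℝ) ^ (1:ℝ) ≤ (2:ℝ) ^ (0.6 * (n:ℝ)) := by
        apply Real.rpow_le_rpow_of_exponent_le (by norm_num)
        nlinarith
      rwa [Real.rpow_one] at this
    have e2 : (2:ℝ) ^ (-(1.4) * (n:ℝ)) ≤ (2:ℝ) ^ (0.6 * (n:ℝ)) * (1/8) := by
      have h1 : (2:ℝ) ^ (-(1.4) * (n:ℝ)) ≤ (2:ℝ) ^ (-2:ℝ) := by
        apply Real.rpow_le_rpow_of_exponent_le (by norm_num)
        nlinarith
      have h2 : (2:ℝ) ^ (-2:ℝ) = 1/4 := by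
        rw [show (-2:ℝ) = -((2:ℕ):ℝ) by norm_num, Real.rpow_neg (by norm_num),
          Real.rpow_natCast]
        norm_num
      nlinarith [h1, h2, h2big]
    linarith [hNm.trans hm2, e1, e2]
  · -- n = 1 : Q.card ≤ 1, so the set is empty
    have hn1 : n = 1 := by omega
    subst hn1
    norm_num at hQ
    have hlt : (2:ℝ) ^ ((1:ℝ)/4) < 2 := by
      have : (2:ℝ) ^ ((1:ℝ)/4) < (2:ℝ) ^ (1:ℝ) :=
        Real.rpow_lt_rpow_of_exponent_lt (by norm_num) (by norm_num)
      rwa [Real.rpow_one] at this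
    have hQ1 : Q.card ≤ 1 := by
      by_contra h
      have h2 : (2:ℝ) ≤ (Q.card : ℝ) := by exact_mod_cast (by omega : 2 ≤ Q.card)
      rw [show ((1:ℝ)/4) = (1:ℝ)/4 from rfl] at hlt
      have : ((2:ℝ)) ^ ((1:ℝ)/4) = (2:ℝ) ^ (4⁻¹:ℝ) := by norm_num
      nlinarith [hQ, hlt, this]
    have hN0 : Nat.card S = 0 := by
      have h0 : Q.card = 0 ∨ Q.card = 1 := by omega
      rcases h0 with h | h <;> rw [h] at hNT <;> omega
    rw [hN0]
    push_cast
    exact mul_nonneg (Real.rpow_nonneg (by norm_num) _) hden.le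
end

section
/- Let n ≥ 2 be a natural number and let K be a natural number with (K : ℝ) ≤ 2^{n/4} (real exponent). Then, as real numbers, the sum over j from 2 to K of (j − 1) / (2^{2n} − 1 − (j − 1)(j − 2)/2) is at most 2^{−1.4·n} (real power). In particular each denominator in the sum is positive. -/
/-!
Write `s = 2^{n/2} ≥ 2`, so `2^{2n} = s⁴` and every `j ≤ K` satisfies `j² ≤ s`. Then each
denominator is at least `s⁴ - s`, and the at most `√s` terms are each at most `√s / (s⁴ - s)`,
so the sum is at most `s / (s⁴ - s) = 1 / (s³ - 1)`. Finally `s³ - s^{2.8} = s^{2.8} (s^{0.2} - 1)`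
is increasing in `s`, hence at least `8 - 2^{2.8} ≥ 1` (as `2¹⁴ ≤ 7⁵`), which gives
`1 / (s³ - 1) ≤ s^{-2.8} = 2^{-1.4 n}`.
-/

open Finset Real

lemma two_rpow_two_point_eight_le_seven : (2 : ℝ) ^ (2.8 : ℝ) ≤ 7 := by
  have h : ((2 : ℝ) ^ (2.8 : ℝ)) ^ 5 ≤ 7 ^ 5 := by
    rw [← rpow_natCast, ← rpow_mul zero_le_two]
    norm_num
  exact le_of_pow_le_pow_left₀ (by norm_num) (by norm_num) h

lemma rpow_two_point_eight_add_one_le_pow_three {s : ℝ} (hs : 2 ≤ s) :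
    s ^ (2.8 : ℝ) + 1 ≤ s ^ 3 := by
  have hs0 : 0 < s := by linarith
  have hfactor (t : ℝ) (ht : 0 < t) :
      t ^ 3 - t ^ (2.8 : ℝ) = t ^ (2.8 : ℝ) * (t ^ (0.2 : ℝ) - 1) := by
    rw [mul_sub, mul_one, ← rpow_add ht, ← rpow_natCast]
    norm_num
  have hmono :
      (2 : ℝ) ^ (2.8 : ℝ) * (2 ^ (0.2 : ℝ) - 1) ≤ s ^ (2.8 : ℝ) * (s ^ (0.2 : ℝ) - 1) := by
    have h02 : 1 ≤ (2 : ℝ) ^ (0.2 : ℝ) := one_le_rpow (by norm_num) (by norm_num)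
    gcongr
  have := two_rpow_two_point_eight_le_seven
  rw [← hfactor 2 two_pos, ← hfactor s hs0] at hmono
  norm_num at hmono
  linarith

lemma div_pow_four_sub_self_le_rpow {s : ℝ} (hs : 2 ≤ s) :
    s / (s ^ 4 - s) ≤ s ^ (-2.8 : ℝ) := by
  have hs0 : 0 < s := by linarith
  have hkey := rpow_two_point_eight_add_one_le_pow_three hs
  have hpos : 0 < s ^ (2.8 : ℝ) := rpow_pos_of_pos hs0 _
  rw [show s ^ 4 - s = s * (s ^ 3 - 1) by ring, div_mul_cancel_left₀ hs0.ne', rpow_neg hs0.le]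
  exact inv_anti₀ hpos (by linarith)

lemma sub_le_sub_one_sub_mul_div_two {M b j : ℝ} (hj : 1 ≤ j) (hjb : j ^ 2 ≤ b) (hb : 2 ≤ b) :
    M - b ≤ M - 1 - (j - 1) * (j - 2) / 2 := by
  nlinarith

lemma sum_Icc_two_le_mul {K : ℕ} {a c : ℝ} (f : ℕ → ℝ) (hK : (K : ℝ) ≤ a) (hc : 0 ≤ c)
    (hf : ∀ j ∈ Icc 2 K, f j ≤ c) : ∑ j ∈ Icc 2 K, f j ≤ a * c := by
  have hcard : ((#(Icc 2 K) : ℕ) : ℝ) ≤ a := by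
    refine le_trans ?_ hK
    rw [Nat.card_Icc]
    exact_mod_cast (by omega : K + 1 - 2 ≤ K)
  calc ∑ j ∈ Icc 2 K, f j ≤ #(Icc 2 K) • c := sum_le_card_nsmul _ _ _ hf
    _ = #(Icc 2 K) * c := nsmul_eq_mul _ _
    _ ≤ a * c := by gcongr

lemma two_le_two_rpow_div_two {x : ℝ} (hx : 2 ≤ x) : 2 ≤ (2 : ℝ) ^ (x / 2) := by
  simpa using rpow_le_rpow_of_exponent_le one_le_two (by linarith : (1 : ℝ) ≤ x / 2)

/-- The arithmetic estimate underlying Fact 1: the sum over `j` from `2` to `K`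
of `(j-1) / (2^{2n} - 1 - (j-1)(j-2)/2)` is at most `2^{-1.4 n}`, provided
`K ≤ 2^{n/4}` and `n ≥ 2`; moreover each denominator is positive. -/
theorem collision_sum_estimate (n : ℕ) (hn : 2 ≤ n) (K : ℕ)
    (hK : (K : ℝ) ≤ (2 : ℝ) ^ ((n : ℝ) / 4)) :
    (∀ j ∈ Finset.Icc 2 K,
        (0 : ℝ) < (2 : ℝ) ^ (2 * n) - 1 - ((j : ℝ) - 1) * ((j : ℝ) - 2) / 2) ∧
    ∑ j ∈ Finset.Icc 2 K,
        ((j : ℝ) - 1) / ((2 : ℝ) ^ (2 * n) - 1 - ((j : ℝ) - 1) * ((j : ℝ) - 2) / 2)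
      ≤ (2 : ℝ) ^ (-(1.4) * (n : ℝ)) := by
  have ha : ((2 : ℝ) ^ ((n : ℝ) / 4)) ^ 2 = 2 ^ ((n : ℝ) / 2) := by
    rw [← rpow_natCast, ← rpow_mul zero_le_two]
    ring_nf
  have hM : (2 : ℝ) ^ (2 * n) = (2 ^ ((n : ℝ) / 2)) ^ 4 := by
    rw [← rpow_natCast (2 ^ _), ← rpow_mul zero_le_two, ← rpow_natCast]
    push_cast
    ring_nf
  set a : ℝ := 2 ^ ((n : ℝ) / 4)
  set s : ℝ := 2 ^ ((n : ℝ) / 2)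
  have hs : 2 ≤ s := two_le_two_rpow_div_two (by exact_mod_cast hn)
  have hsM : 0 < s ^ 4 - s := sub_pos.2 (lt_self_pow₀ (by linarith) (by norm_num))
  have hj : ∀ j ∈ Icc 2 K, 1 ≤ (j : ℝ) ∧ (j : ℝ) ≤ a := fun j hmem => by
    obtain ⟨h2j, hjK⟩ := mem_Icc.1 hmem
    exact ⟨by exact_mod_cast (by omega : 1 ≤ j), le_trans (by exact_mod_cast hjK) hK⟩
  have hdenom : ∀ j ∈ Icc 2 K, s ^ 4 - s ≤ s ^ 4 - 1 - ((j : ℝ) - 1) * ((j : ℝ) - 2) / 2 :=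
    fun j hmem => sub_le_sub_one_sub_mul_div_two (hj j hmem).1
      (ha ▸ pow_le_pow_left₀ (by positivity) (hj j hmem).2 2) hs
  rw [hM]
  refine ⟨fun j hmem => hsM.trans_le (hdenom j hmem), ?_⟩
  calc _ ≤ a * (a / (s ^ 4 - s)) :=
        sum_Icc_two_le_mul _ hK (div_nonneg (by positivity) hsM.le) fun j hmem =>
          div_le_div₀ (by positivity) (by linarith [(hj j hmem).2]) hsM (hdenom j hmem)
    _ = s / (s ^ 4 - s) := by rw [← mul_div_assoc, ← sq, ha]
    _ ≤ s ^ (-2.8 : ℝ) := div_pow_four_sub_self_le_rpow hs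
    _ = 2 ^ (-(1.4) * (n : ℝ)) := by
        rw [← rpow_mul zero_le_two]
        ring_nf
end
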